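/- If F is a winning team, then F contains a skinny polyomino, i.e., some element of F has all of its cells lying in a single row or a single column of ℤ². -/

import Mathlib

/-- A cell of the rectangular board. -/
abbrev Cell : Type := ℤ × ℤ

/-- Two cells are adjacent if they differ by (±1,0) or (0,±1). -/
def Adjacent (a b : Cell) : Prop :=
  (a.1 - b.1).natAbs + (a.2 - b.2).natAbs = 1

/-- A polyomino is a nonempty subset of ℤ² connected through adjacent cells. -/
def IsPolyomino (P : Set Cell) : Prop :=
  P.Nonempty ∧ ∀ a ∈ P, ∀ b ∈ P,
    Relation.ReflTransGen (fun x y => x ∈ P ∧ y ∈ P ∧ Adjacent x y) a b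

/-- Symmetries of the board: compositions of an integer translation with one of the
eight signed/swap linear maps (rotations by multiples of 90° and reflections). -/
def IsSym (f : Cell → Cell) : Prop :=
  ∃ (t : Cell) (a b s : Bool), ∀ p : Cell,
    f p = (t.1 + (if a then (if s then p.2 else p.1) else -(if s then p.2 else p.1)),
           t.2 + (if b then (if s then p.1 else p.2) else -(if s then p.1 else p.2)))

/-- Two subsets of ℤ² are congruent if one is the image of the other under a symmetry. -/
def CellCongruent (A B : Set Cell) : Prop := ∃ f, IsSym f ∧ f '' A = B

/-- `Ancestor P Q` (written P ⊑ Q): `Q` contains a subset congruent to `P`. -/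
def Ancestor (P Q : Set Cell) : Prop := ∃ S, S ⊆ Q ∧ CellCongruent P S

/-- `Simpler S T` (written S ⪯ T): every member of `T` has an ancestor in `S`. -/
def Simpler (S T : Set (Set Cell)) : Prop := ∀ Q ∈ T, ∃ P ∈ S, Ancestor P Q

/-- A team: a set of polyominoes no member of which is an ancestor of another member. -/
def IsTeam (F : Set (Set Cell)) : Prop :=
  (∀ P ∈ F, IsPolyomino P) ∧ ∀ P ∈ F, ∀ Q ∈ F, P ≠ Q → ¬ Ancestor P Q

/-- The cells marked so far, given the list of the maker's moves and
the list of the breaker's (pairs of) moves. -/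
def markedCells (ms : List Cell) (bs : List (Cell × Cell)) : Set Cell :=
  {c | c ∈ ms ∨ ∃ p ∈ bs, c = p.1 ∨ c = p.2}

/-- Maker strategy: from the maker's past moves and the breaker's past moves,
produce the maker's next mark. -/
abbrev MStrategy := List Cell → List (Cell × Cell) → Cell

/-- Breaker strategy: from the maker's moves so far (including his latest one) and the
breaker's past moves, produce the breaker's next two marks. -/
abbrev BStrategy := List Cell → List (Cell × Cell) → Cell × Cell

/-- A legal maker strategy always marks a previously unmarked cell. -/
def MLegal (σ : MStrategy) : Prop := ∀ ms bs, σ ms bs ∉ markedCells ms bs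

/-- A legal breaker strategy always marks two distinct previously unmarked cells. -/
def BLegal (τ : BStrategy) : Prop :=
  ∀ ms bs, (τ ms bs).1 ≠ (τ ms bs).2 ∧
    (τ ms bs).1 ∉ markedCells ms bs ∧ (τ ms bs).2 ∉ markedCells ms bs

/-- The lists of moves after `n` full rounds of the weak (1,2)-achievement game,
the maker moving first in each round. -/
def play (σ : MStrategy) (τ : BStrategy) : ℕ → List Cell × List (Cell × Cell)
  | 0 => ([], [])
  | n + 1 =>
      let p := play σ τ n
      let mv := σ p.1 p.2
      (p.1 ++ [mv], p.2 ++ [τ (p.1 ++ [mv]) p.2])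

/-- The set of cells marked by the maker during the first `n` rounds. -/
def makerSet (σ : MStrategy) (τ : BStrategy) (n : ℕ) : Set Cell :=
  {c | c ∈ (play σ τ n).1}

/-- The maker achieves `F` in the play of `σ` against `τ`: at some finite stage his
marked cells contain a subset congruent to a member of `F`. -/
def Achieves (F : Set (Set Cell)) (σ : MStrategy) (τ : BStrategy) : Prop :=
  ∃ n, ∃ Q ∈ F, Ancestor Q (makerSet σ τ n)

/-- A (bounded) set of polyominoes is a winner of the weak (1,2)-achievement game if the
maker has a legal strategy achieving it against every legal breaker strategy. -/
def GameWinner (F : Set (Set Cell)) : Prop :=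
  ∃ σ, MLegal σ ∧ ∀ τ, BLegal τ → Achieves F σ τ

/-- A set of polyominoes is bounded if all its members are finite. -/
def Bounded (F : Set (Set Cell)) : Prop := ∀ P ∈ F, P.Finite

/-- `G` is a bounded restriction of `T`: `G = {F_P : P ∈ T}` for a choice of a finite
polyomino ancestor `F_P ⊑ P` for each `P ∈ T`. -/
def BoundedRestriction (T G : Set (Set Cell)) : Prop :=
  ∃ f : Set Cell → Set Cell,
    (∀ P ∈ T, (f P).Finite ∧ IsPolyomino (f P) ∧ Ancestor (f P) P) ∧ G = f '' T

/-- Winner for a possibly unbounded set of polyominoes: a bounded set is a winner if the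
maker can achieve it; an unbounded set is a winner if every bounded restriction is. -/
def Winner (F : Set (Set Cell)) : Prop :=
  (Bounded F ∧ GameWinner F) ∨
  (¬ Bounded F ∧ ∀ G, BoundedRestriction F G → GameWinner G)

/-- The skinny polyomino `S_n`: `n` cells in a horizontal row. -/
def Srow (n : ℕ) : Set Cell := {p | 0 ≤ p.1 ∧ p.1 < (n : ℤ) ∧ p.2 = 0}

/-- The one-way infinite skinny polyomino `S_∞`. -/
def Sinf : Set Cell := {p | 0 ≤ p.1 ∧ p.2 = 0}

/-- The L-tromino `L_2`. -/
def L2 : Set Cell := {(0, 0), (1, 0), (1, 1)}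

/-- The L-tetromino `L_3`. -/
def L3 : Set Cell := {(0, 0), (1, 0), (2, 0), (2, 1)}

/-- The T-tetromino `T_2`. -/
def T2 : Set Cell := {(0, 0), (1, 0), (2, 0), (1, 1)}

/-- The 2×2 square tetromino `C_2`. -/
def C2 : Set Cell := {(0, 0), (1, 0), (0, 1), (1, 1)}

/-- The S-tetromino `Z_2`. -/
def Z2 : Set Cell := {(0, 0), (1, 0), (1, 1), (2, 1)}

/-- `C_n`: a horizontal row of `n` cells plus the cells above its two end cells. -/
def Cpoly (n : ℕ) : Set Cell :=
  {p | 0 ≤ p.1 ∧ p.1 < (n : ℤ) ∧ p.2 = 0} ∪ {(0, 1), ((n : ℤ) - 1, 1)}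

/-- `Z_n`: a horizontal row of `n` cells plus the cell above one end cell and the cell
below the other end cell. -/
def Zpoly (n : ℕ) : Set Cell :=
  {p | 0 ≤ p.1 ∧ p.1 < (n : ℤ) ∧ p.2 = 0} ∪ {(0, 1), ((n : ℤ) - 1, -1)}

/-- A polyomino is skinny if all its cells lie in one row or one column. -/
def Skinny (P : Set Cell) : Prop :=
  (∃ r, ∀ p ∈ P, p.2 = r) ∨ (∃ c, ∀ p ∈ P, p.1 = c)

/-- A 2-paving: an irreflexive symmetric relation on cells in which every cell is
related to at most two other cells. -/
def TwoPaving (R : Cell → Cell → Prop) : Prop :=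
  (∀ a, ¬ R a a) ∧ (∀ a b, R a b → R b a) ∧
  ∀ a, ∃ b c, ∀ d, R a d → d = b ∨ d = c

/-- The paving strategy based on `R`: a legal breaker strategy that marks every currently
unmarked cell related by `R` to the maker's last move. -/
def PavingStrategy (R : Cell → Cell → Prop) (τ : BStrategy) : Prop :=
  BLegal τ ∧ ∀ ms bs, ∀ last ∈ ms.getLast?, ∀ c, R last c →
    c ∉ markedCells ms bs → (c = (τ ms bs).1 ∨ c = (τ ms bs).2)

/-- `Q` is killed by `R`: every subset of ℤ² congruent to `Q` contains two related cells. -/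
def Killed (R : Cell → Cell → Prop) (Q : Set Cell) : Prop :=
  ∀ S : Set Cell, CellCongruent Q S → ∃ a ∈ S, ∃ b ∈ S, R a b

/-- The unbounded team `W = {S_∞, T_2} ∪ {C_n : n ≥ 2} ∪ {Z_n : n ≥ 2}`. -/
def Wteam : Set (Set Cell) :=
  {Sinf, T2} ∪ {P | ∃ n, 2 ≤ n ∧ P = Cpoly n} ∪ {P | ∃ n, 2 ≤ n ∧ P = Zpoly n}

/-!
The breaker pairs every cell with its two horizontal neighbours: whenever the maker marks a
cell, the breaker marks its free neighbours. The maker then never owns two horizontally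
adjacent cells, whereas every copy of a non-skinny polyomino contains a horizontal domino, since
the polyomino has both a horizontal and a vertical one. So no set of non-skinny polyominoes is
a winner, and for an unbounded team it suffices to restrict each member to a finite non-skinny
sub-polyomino.
-/

theorem Set.Finite.exists_pair_covering_compl {α : Type*} [Infinite α] {M : Set α}
    (hM : M.Finite) (a b : α) :
    ∃ p q, p ≠ q ∧ p ∉ M ∧ q ∉ M ∧ ∀ c, (c = a ∨ c = b) → c ∉ M → c = p ∨ c = q := by
  have hU : ({a, b} \ M : Set α).ncard ≤ 2 :=
    (Set.ncard_le_ncard Set.sdiff_subset (Set.toFinite _)).trans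
      ((Set.ncard_insert_le a {b}).trans (by simp))
  obtain ⟨V, hUV, hVM, hV⟩ := hM.infinite_compl.exists_superset_ncard_eq
    (fun c hc => hc.2) (Set.toFinite _) hU
  obtain ⟨p, q, hpq, rfl⟩ := Set.ncard_eq_two.mp hV
  exact ⟨p, q, hpq, hVM (by simp), hVM (by simp), fun c hc hcM => hUV ⟨hc, hcM⟩⟩

theorem Relation.ReflTransGen.exists_ne_of_ne {α β : Type*} {r : α → α → Prop} {g : α → β}
    {a b : α} (h : Relation.ReflTransGen r a b) (hab : g a ≠ g b) :
    ∃ x y, r x y ∧ g x ≠ g y := by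
  induction h with
  | refl => exact absurd rfl hab
  | @tail c d _ hcd ih =>
    by_cases hgc : g c = g d
    · exact ih (hgc ▸ hab)
    · exact ⟨c, d, hcd, hgc⟩

section InducedPath

variable {α : Type*} {r : α → α → Prop}

theorem Relation.ReflTransGen.mono_induced {S T : Set α} (hST : S ⊆ T) {x y : α}
    (h : Relation.ReflTransGen (fun x y => x ∈ S ∧ y ∈ S ∧ r x y) x y) :
    Relation.ReflTransGen (fun x y => x ∈ T ∧ y ∈ T ∧ r x y) x y :=
  Relation.ReflTransGen.mono (fun _ _ huv => ⟨hST huv.1, hST huv.2.1, huv.2.2⟩) _ _ h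

theorem Relation.ReflTransGen.exists_finite_induced {P : Set α} {a b : α}
    (h : Relation.ReflTransGen (fun x y => x ∈ P ∧ y ∈ P ∧ r x y) a b) (ha : a ∈ P) :
    ∃ S ⊆ P, S.Finite ∧ a ∈ S ∧ b ∈ S ∧
      ∀ x ∈ S, Relation.ReflTransGen (fun x y => x ∈ S ∧ y ∈ S ∧ r x y) a x := by
  induction h with
  | refl =>
    exact ⟨{a}, Set.singleton_subset_iff.mpr ha, Set.finite_singleton a, rfl, rfl,
      fun x hx => hx ▸ .refl⟩
  | @tail c d _ hcd ih =>
    obtain ⟨S, hSP, hS, haS, hcS, hconn⟩ := ih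
    have hsub : S ⊆ insert d S := Set.subset_insert d S
    refine ⟨insert d S, Set.insert_subset hcd.2.1 hSP, hS.insert d, hsub haS,
      Set.mem_insert d S, ?_⟩
    rintro x (rfl | hx)
    · exact ((hconn c hcS).mono_induced hsub).tail ⟨hsub hcS, Set.mem_insert _ S, hcd.2.2⟩
    · exact (hconn x hx).mono_induced hsub

end InducedPath

theorem Adjacent.symm {a b : Cell} (h : Adjacent a b) : Adjacent b a := by
  unfold Adjacent at *; omega

theorem Adjacent.snd_eq_of_fst_ne {a b : Cell} (h : Adjacent a b) (h₁ : a.1 ≠ b.1) :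
    a.2 = b.2 := by
  unfold Adjacent at h; omega

theorem Adjacent.fst_eq_of_snd_ne {a b : Cell} (h : Adjacent a b) (h₂ : a.2 ≠ b.2) :
    a.1 = b.1 := by
  unfold Adjacent at h; omega

theorem IsSym.adjacent {f : Cell → Cell} (hf : IsSym f) {x y : Cell} (h : Adjacent x y) :
    Adjacent (f x) (f y) := by
  obtain ⟨t, a, b, s, hfp⟩ := hf
  unfold Adjacent at *
  rw [hfp x, hfp y]
  cases a <;> cases b <;> cases s <;> simp <;> omega

/-- A symmetry either keeps rows as rows or turns columns into rows. -/
theorem IsSym.snd_eq_or_snd_eq {f : Cell → Cell} (hf : IsSym f) {x y u v : Cell}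
    (hxy : x.2 = y.2) (huv : u.1 = v.1) : (f x).2 = (f y).2 ∨ (f u).2 = (f v).2 := by
  obtain ⟨t, a, b, s, hfp⟩ := hf
  rw [hfp x, hfp y, hfp u, hfp v]
  cases b <;> cases s <;> simp [hxy, huv]

theorem IsPolyomino.exists_adjacent_ne {β : Type*} {P : Set Cell} (hP : IsPolyomino P)
    {g : Cell → β} {a b : Cell} (ha : a ∈ P) (hb : b ∈ P) (hab : g a ≠ g b) :
    ∃ x ∈ P, ∃ y ∈ P, Adjacent x y ∧ g x ≠ g y := by
  obtain ⟨x, y, ⟨hx, hy, hxy⟩, hne⟩ := (hP.2 a ha b hb).exists_ne_of_ne hab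
  exact ⟨x, hx, y, hy, hxy, hne⟩

theorem exists_ne_of_not_skinny {P : Set Cell} (hP : ¬ Skinny P) (p : Cell) :
    (∃ q ∈ P, q.1 ≠ p.1) ∧ (∃ q ∈ P, q.2 ≠ p.2) := by
  simp only [Skinny, not_or, not_exists, not_forall, exists_prop] at hP
  exact ⟨hP.2 p.1, hP.1 p.2⟩

theorem CellCongruent.refl (P : Set Cell) : CellCongruent P P :=
  ⟨id, ⟨(0, 0), true, true, false, fun p => by simp⟩, Set.image_id P⟩

theorem Ancestor.of_subset {S P : Set Cell} (h : S ⊆ P) : Ancestor S P :=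
  ⟨S, h, CellCongruent.refl S⟩

theorem isPolyomino_of_forall_reflTransGen {S : Set Cell} {a : Cell} (ha : a ∈ S)
    (h : ∀ x ∈ S, Relation.ReflTransGen (fun x y => x ∈ S ∧ y ∈ S ∧ Adjacent x y) a x) :
    IsPolyomino S := by
  refine ⟨⟨a, ha⟩, fun x hx y hy => ?_⟩
  have : Std.Symm (fun x y => x ∈ S ∧ y ∈ S ∧ Adjacent x y) :=
    ⟨fun _ _ h => ⟨h.2.1, h.1, h.2.2.symm⟩⟩
  exact (Std.Symm.symm _ _ (h x hx)).trans (h y hy)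

theorem IsPolyomino.exists_finite_not_skinny {P : Set Cell} (hP : IsPolyomino P)
    (hns : ¬ Skinny P) : ∃ S ⊆ P, S.Finite ∧ IsPolyomino S ∧ ¬ Skinny S := by
  obtain ⟨p, hp⟩ := hP.1
  obtain ⟨⟨q, hq, hq₁⟩, ⟨q', hq', hq'₂⟩⟩ := exists_ne_of_not_skinny hns p
  obtain ⟨S, hSP, hS, hpS, hqS, hconnS⟩ := (hP.2 p hp q hq).exists_finite_induced hp
  obtain ⟨T, hTP, hT, -, hq'T, hconnT⟩ := (hP.2 p hp q' hq').exists_finite_induced hp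
  refine ⟨S ∪ T, Set.union_subset hSP hTP, hS.union hT,
    isPolyomino_of_forall_reflTransGen (Or.inl hpS) ?_, ?_⟩
  · rintro x (hx | hx)
    · exact (hconnS x hx).mono_induced Set.subset_union_left
    · exact (hconnT x hx).mono_induced Set.subset_union_right
  · rintro (⟨r, hr⟩ | ⟨c, hc⟩)
    · exact hq'₂ ((hr q' (Or.inr hq'T)).trans (hr p (Or.inl hpS)).symm)
    · exact hq₁ ((hc q (Or.inl hqS)).trans (hc p (Or.inl hpS)).symm)

def HorizAdj (a b : Cell) : Prop := Adjacent a b ∧ a.2 = b.2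

theorem twoPaving_horizAdj : TwoPaving HorizAdj := by
  refine ⟨fun a h => ?_, fun a b h => ⟨h.1.symm, h.2.symm⟩,
    fun a => ⟨(a.1 + 1, a.2), (a.1 - 1, a.2), fun d ⟨had, h₂⟩ => ?_⟩⟩
  · simp [HorizAdj, Adjacent] at h
  · unfold Adjacent at had
    rcases (by omega : d.1 = a.1 + 1 ∨ d.1 = a.1 - 1) with h | h
    · exact Or.inl (Prod.ext h h₂.symm)
    · exact Or.inr (Prod.ext h h₂.symm)

theorem killed_horizAdj_of_not_skinny {Q : Set Cell} (hQ : IsPolyomino Q)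
    (hns : ¬ Skinny Q) : Killed HorizAdj Q := by
  rintro _ ⟨f, hf, rfl⟩
  obtain ⟨p, hp⟩ := hQ.1
  obtain ⟨⟨q, hq, hq₁⟩, ⟨q', hq', hq'₂⟩⟩ := exists_ne_of_not_skinny hns p
  obtain ⟨x, hx, y, hy, hxy, hne₁⟩ := hQ.exists_adjacent_ne (g := Prod.fst) hq hp hq₁
  obtain ⟨u, hu, v, hv, huv, hne₂⟩ := hQ.exists_adjacent_ne (g := Prod.snd) hq' hp hq'₂
  rcases hf.snd_eq_or_snd_eq (hxy.snd_eq_of_fst_ne hne₁) (huv.fst_eq_of_snd_ne hne₂)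
    with h | h
  · exact ⟨f x, Set.mem_image_of_mem f hx, f y, Set.mem_image_of_mem f hy, hf.adjacent hxy, h⟩
  · exact ⟨f u, Set.mem_image_of_mem f hu, f v, Set.mem_image_of_mem f hv, hf.adjacent huv, h⟩

theorem markedCells_finite (ms : List Cell) (bs : List (Cell × Cell)) :
    (markedCells ms bs).Finite := by
  refine (ms ++ bs.map Prod.fst ++ bs.map Prod.snd).finite_toSet.subset ?_
  rintro c (h | ⟨p, hp, rfl | rfl⟩)
  · exact List.mem_append_left _ (List.mem_append_left _ h)
  · exact List.mem_append_left _ (List.mem_append_right _ (List.mem_map_of_mem hp))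
  · exact List.mem_append_right _ (List.mem_map_of_mem hp)

theorem markedCells_mono {ms ms' : List Cell} {bs bs' : List (Cell × Cell)}
    (hms : ms ⊆ ms') (hbs : bs ⊆ bs') : markedCells ms bs ⊆ markedCells ms' bs' := by
  rintro c (h | ⟨p, hp, h⟩)
  · exact Or.inl (hms h)
  · exact Or.inr ⟨p, hbs hp, h⟩

section Play

variable {σ : MStrategy} {τ : BStrategy}

theorem markedCells_play_mono {m n : ℕ} (h : m ≤ n) :
    markedCells (play σ τ m).1 (play σ τ m).2 ⊆ markedCells (play σ τ n).1 (play σ τ n).2 := by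
  induction h with
  | refl => exact subset_rfl
  | step _ ih =>
    exact ih.trans (markedCells_mono (List.subset_append_left _ _) (List.subset_append_left _ _))

theorem exists_lt_of_mem_makerSet {n : ℕ} {a : Cell} (h : a ∈ makerSet σ τ n) :
    ∃ i < n, a = σ (play σ τ i).1 (play σ τ i).2 := by
  induction n with
  | zero => simp [makerSet, play] at h
  | succ k ih =>
    rcases List.mem_append.mp h with h | h
    · obtain ⟨i, hi, rfl⟩ := ih h
      exact ⟨i, Nat.lt_succ_of_lt hi, rfl⟩
    · exact ⟨k, Nat.lt_succ_self k, List.mem_singleton.mp h⟩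

end Play

theorem exists_pavingStrategy {R : Cell → Cell → Prop} (hR : TwoPaving R) :
    ∃ τ, PavingStrategy R τ := by
  choose nb₁ nb₂ hnb using hR.2.2
  choose p q hpq hp hq hcov using fun ms bs =>
    (markedCells_finite ms bs).exists_pair_covering_compl
      (nb₁ (ms.getLastD (0, 0))) (nb₂ (ms.getLastD (0, 0)))
  refine ⟨fun ms bs => (p ms bs, q ms bs), fun ms bs => ⟨hpq ms bs, hp ms bs, hq ms bs⟩, ?_⟩
  intro ms bs last hlast c hc
  have hcov := hcov ms bs c
  rw [List.getLastD_eq_getLast?, Option.mem_def.mp hlast] at hcov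
  exact hcov (hnb last c hc)

namespace PavingStrategy

variable {R : Cell → Cell → Prop} {σ : MStrategy} {τ : BStrategy}

theorem not_rel_of_lt (hτ : PavingStrategy R τ) (hσ : MLegal σ) {i j : ℕ} (hij : i < j) :
    ¬ R (σ (play σ τ i).1 (play σ τ i).2) (σ (play σ τ j).1 (play σ τ j).2) := by
  intro hab
  set ms := (play σ τ i).1
  set bs := (play σ τ i).2
  set a := σ ms bs
  have hmono : markedCells (play σ τ (i + 1)).1 (play σ τ (i + 1)).2 ⊆
      markedCells (play σ τ j).1 (play σ τ j).2 := markedCells_play_mono hij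
  have hfree : σ (play σ τ j).1 (play σ τ j).2 ∉ markedCells (ms ++ [a]) bs :=
    fun h => hσ _ _ (hmono (markedCells_mono (fun _ h => h) (List.subset_append_left _ _) h))
  have hcov := hτ.2 (ms ++ [a]) bs a (by simp) _ hab hfree
  exact hσ _ _ (hmono
    (Or.inr ⟨τ (ms ++ [a]) bs, List.mem_append_right _ (List.mem_singleton_self _), hcov⟩))

theorem not_rel_of_mem_makerSet (hR : TwoPaving R) (hτ : PavingStrategy R τ) (hσ : MLegal σ)
    {n : ℕ} {a b : Cell} (ha : a ∈ makerSet σ τ n) (hb : b ∈ makerSet σ τ n) : ¬ R a b := by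
  obtain ⟨i, -, rfl⟩ := exists_lt_of_mem_makerSet ha
  obtain ⟨j, -, rfl⟩ := exists_lt_of_mem_makerSet hb
  rcases lt_trichotomy i j with h | rfl | h
  · exact hτ.not_rel_of_lt hσ h
  · exact hR.1 _
  · exact fun hab => hτ.not_rel_of_lt hσ h (hR.2.1 _ _ hab)

end PavingStrategy

theorem not_gameWinner_of_killed {R : Cell → Cell → Prop} (hR : TwoPaving R)
    {G : Set (Set Cell)} (hG : ∀ Q ∈ G, Killed R Q) : ¬ GameWinner G := by
  rintro ⟨σ, hσ, hwin⟩
  obtain ⟨τ, hτ⟩ := exists_pavingStrategy hR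
  obtain ⟨n, Q, hQ, S, hS, hQS⟩ := hwin τ hτ.1
  obtain ⟨a, ha, b, hb, hab⟩ := hG Q hQ S hQS
  exact hτ.not_rel_of_mem_makerSet hR hσ (hS ha) (hS hb) hab

/-- every winning team contains a skinny polyomino. -/
theorem stmt10 (F : Set (Set Cell)) (hF : IsTeam F) (hw : Winner F) :
    ∃ P ∈ F, Skinny P := by
  by_contra! hns
  have hloser : ∀ {G}, (∀ Q ∈ G, IsPolyomino Q ∧ ¬ Skinny Q) → ¬ GameWinner G :=
    fun hG => not_gameWinner_of_killed twoPaving_horizAdj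
      fun Q hQ => killed_horizAdj_of_not_skinny (hG Q hQ).1 (hG Q hQ).2
  rcases hw with ⟨-, hwin⟩ | ⟨-, hwin⟩
  · exact hloser (fun Q hQ => ⟨hF.1 Q hQ, hns Q hQ⟩) hwin
  · choose! g hgP hg using fun P hP => (hF.1 P hP).exists_finite_not_skinny (hns P hP)
    refine hloser ?_ (hwin (g '' F) ⟨g, fun P hP => ?_, rfl⟩)
    · rintro _ ⟨P, hP, rfl⟩
      exact (hg P hP).2
    · exact ⟨(hg P hP).1, (hg P hP).2.1, Ancestor.of_subset (hgP P hP)⟩
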